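/- arXiv:2410.14601 — 6 statements merged into one kernel-verified Lean document; each statement's English description precedes it below -/
import Mathlib

section
/- For any θ ∈ ℝ and any λ > e^{θ-γ}, the Laplace transform of G_θ satisfies ∫₀^∞ e^{-λt} G_θ(t) dt = 1/(log λ - θ + γ), where γ is the Euler–Mascheroni constant. -/
/-!
Multiply by `e^{-λt}` and integrate in `t` first; Fubini applies since the integrand is
nonnegative and the iterated integral is finite.
For fixed `s > 0`, `∫₀^∞ e^{-λt} t^{s-1} dt = Γ(s) λ^{-s}`, and `s Γ(s) = Γ(s+1)`, so the inner
integral collapses to `e^{(θ-γ)s} λ^{-s} = e^{-(log λ - θ + γ)s}`, whose integral over `s > 0` is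
`1 / (log λ - θ + γ)`, finite exactly because `λ > e^{θ-γ}`.
-/

open MeasureTheory Set

/-- The Euler–Mascheroni constant `γ = -∫₀^∞ (log u) e^{-u} du`. -/
noncomputable def eulerGamma : ℝ := -∫ u in Set.Ioi (0:ℝ), Real.log u * Real.exp (-u)

/-- The renewal density `G_θ` of the Dickman subordinator. -/
noncomputable def G (θ t : ℝ) : ℝ :=
  ∫ s in Set.Ioi (0:ℝ),
    Real.exp ((θ - eulerGamma) * s) * s * t ^ (s - 1) / Real.Gamma (s + 1)

open Real

/-- `G θ t` is by definition `∫ s in Ioi 0, dickmanKernel (θ - eulerGamma) t s`. -/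
noncomputable def dickmanKernel (a t s : ℝ) : ℝ :=
  exp (a * s) * s * t ^ (s - 1) / Gamma (s + 1)

section

variable {a lam s : ℝ}

theorem dickmanKernel_nonneg {t : ℝ} (ht : 0 < t) (hs : 0 < s) : 0 ≤ dickmanKernel a t s := by
  have := Gamma_pos_of_pos (by linarith : 0 < s + 1)
  unfold dickmanKernel
  positivity

theorem continuousOn_dickmanKernel :
    ContinuousOn (Function.uncurry (dickmanKernel a)) (Ioi 0 ×ˢ Ioi 0) := by
  rintro ⟨t, s⟩ ⟨ht, hs⟩
  simp only [mem_Ioi] at ht hs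
  have hΓ : DifferentiableAt ℝ Gamma (s + 1) :=
    differentiableAt_Gamma fun m hm => by
      have : (0 : ℝ) ≤ m := m.cast_nonneg
      linarith
  refine ContinuousAt.continuousWithinAt ?_
  have hΓ' : ContinuousAt (fun p : ℝ × ℝ => Gamma (p.2 + 1)) (t, s) :=
    hΓ.continuousAt.comp (f := fun p : ℝ × ℝ => p.2 + 1) (x := (t, s)) (by fun_prop)
  refine ContinuousAt.div ?_ hΓ' (Gamma_pos_of_pos (by linarith)).ne'
  exact ContinuousAt.mul (by fun_prop) (continuousAt_fst.rpow (by fun_prop) (Or.inl ht.ne'))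

theorem exp_neg_mul_mul_dickmanKernel (t : ℝ) :
    exp (-lam * t) * dickmanKernel a t s
      = exp (a * s) * s / Gamma (s + 1) * (t ^ (s - 1) * exp (-(lam * t))) := by
  rw [dickmanKernel, neg_mul]
  ring

theorem integrableOn_exp_neg_mul_mul_dickmanKernel (hs : 0 < s) (hlam : 0 < lam) :
    IntegrableOn (fun t => exp (-lam * t) * dickmanKernel a t s) (Ioi 0) := by
  simp_rw [exp_neg_mul_mul_dickmanKernel]
  refine Integrable.const_mul ?_ _
  simpa [IntegrableOn, rpow_one, neg_mul] using
    integrableOn_rpow_mul_exp_neg_mul_rpow (by linarith : -1 < s - 1) one_pos hlam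

theorem integral_exp_neg_mul_mul_dickmanKernel (hs : 0 < s) (hlam : 0 < lam) :
    ∫ t in Ioi 0, exp (-lam * t) * dickmanKernel a t s = exp (-(log lam - a) * s) := by
  simp_rw [exp_neg_mul_mul_dickmanKernel]
  rw [integral_const_mul, integral_rpow_mul_exp_neg_mul_Ioi hs hlam, Gamma_add_one hs.ne',
    rpow_def_of_pos (by positivity), one_div, log_inv]
  have := (Gamma_pos_of_pos hs).ne'
  field_simp
  rw [← exp_add]
  ring_nf

theorem integrable_exp_neg_mul_mul_dickmanKernel_prod (hlam : 0 < lam) (h : a < log lam) :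
    Integrable (Function.uncurry fun t s => exp (-lam * t) * dickmanKernel a t s)
      ((volume.restrict (Ioi 0)).prod (volume.restrict (Ioi 0))) := by
  have hmeas : AEStronglyMeasurable
      (Function.uncurry fun t s => exp (-lam * t) * dickmanKernel a t s)
      ((volume.restrict (Ioi 0)).prod (volume.restrict (Ioi 0))) := by
    rw [Measure.prod_restrict, ← Measure.volume_eq_prod]
    exact ((continuous_exp.comp (continuous_const.mul continuous_fst)).continuousOn.mul
      continuousOn_dickmanKernel).aestronglyMeasurable (measurableSet_Ioi.prod measurableSet_Ioi)
  refine (integrable_prod_iff' hmeas).2 ⟨?_, ?_⟩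
  · filter_upwards [self_mem_ae_restrict measurableSet_Ioi] with s hs
    exact integrableOn_exp_neg_mul_mul_dickmanKernel hs hlam
  · refine (exp_neg_integrableOn_Ioi 0 (sub_pos.2 h)).congr_fun (fun s hs => ?_) measurableSet_Ioi
    dsimp only [Function.uncurry_apply_pair]
    rw [← integral_exp_neg_mul_mul_dickmanKernel hs hlam]
    refine setIntegral_congr_fun measurableSet_Ioi fun t ht => ?_
    exact (norm_of_nonneg (mul_nonneg (exp_pos _).le (dickmanKernel_nonneg ht hs))).symm

theorem integral_exp_neg_mul_integral_dickmanKernel (hlam : exp a < lam) :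
    ∫ t in Ioi 0, exp (-lam * t) * ∫ s in Ioi 0, dickmanKernel a t s = 1 / (log lam - a) := by
  have hlam0 : 0 < lam := (exp_pos a).trans hlam
  have ha : a < log lam := (lt_log_iff_exp_lt hlam0).2 hlam
  calc ∫ t in Ioi 0, exp (-lam * t) * ∫ s in Ioi 0, dickmanKernel a t s
      = ∫ t in Ioi 0, ∫ s in Ioi 0, exp (-lam * t) * dickmanKernel a t s := by
        simp_rw [integral_const_mul]
    _ = ∫ s in Ioi 0, ∫ t in Ioi 0, exp (-lam * t) * dickmanKernel a t s :=
        integral_integral_swap (integrable_exp_neg_mul_mul_dickmanKernel_prod hlam0 ha)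
    _ = ∫ s in Ioi 0, exp (-(log lam - a) * s) :=
        setIntegral_congr_fun measurableSet_Ioi fun s hs =>
          integral_exp_neg_mul_mul_dickmanKernel hs hlam0
    _ = 1 / (log lam - a) := by
        rw [integral_exp_mul_Ioi (neg_lt_zero.2 (sub_pos.2 ha)), mul_zero, exp_zero,
          neg_div_neg_eq]

end

theorem laplace_transform_G (θ lam : ℝ) (hlam : lam > Real.exp (θ - eulerGamma)) :
    (∫ t in Set.Ioi (0:ℝ), Real.exp (-lam * t) * G θ t)
      = 1 / (Real.log lam - θ + eulerGamma) := by
  rw [sub_add]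
  exact integral_exp_neg_mul_integral_dickmanKernel hlam
end

section
/- Define coefficients c^k_i for integers k ≥ 0 and i ≥ 0 by c^0_0 = 1, c^k_i = 0 for i > k, and the recursion c^{k+1}_i = Σ_{j=0}^{i} c^k_j for i ≤ k+1. Then for all 0 ≤ i ≤ m, c^m_i = (m - i + 1)/i! · (m+i)!/(m+1)!. -/
/-!
The coefficients obey the Pascal-type rule `c^{m+1}_{i+1} = c^{m+1}_i + c^m_{i+1}` for `i ≤ m`.
Clearing denominators, the formula becomes `c^m_i · i! · (m+1)! = (m+1-i) · (m+i)!`, which holds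
for every `i` (both sides vanish when `i > m`) and follows by induction on `m` and then on `i`:
the step reduces to `(i+1)(m+2-i) + (m+2)(m-i) = (m+1-i)(m+i+2)`.
-/

/-- The combinatorial coefficients `c^k_i`: `c^0_0 = 1`, `c^k_i = 0` for `i > k`,
and `c^{k+1}_i = ∑_{j=0}^i c^k_j` for `i ≤ k+1`. -/
def c : ℕ → ℕ → ℕ
  | 0, 0 => 1
  | 0, _ + 1 => 0
  | k + 1, i => if i ≤ k + 1 then ∑ j ∈ Finset.range (i + 1), c k j else 0

open scoped Nat

theorem c_zero_right : ∀ m, c m 0 = 1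
  | 0 => rfl
  | m + 1 => by simp [c, c_zero_right m]

theorem c_eq_zero_of_lt : ∀ {m i : ℕ}, m < i → c m i = 0
  | 0, _ + 1, _ => rfl
  | _ + 1, _, h => if_neg (Nat.not_le.mpr h)

theorem c_succ_succ {m i : ℕ} (h : i ≤ m) :
    c (m + 1) (i + 1) = c (m + 1) i + c m (i + 1) := by
  simp [c, h, h.trans m.le_succ, Finset.sum_range_succ]

theorem c_mul_factorial_mul_factorial (m i : ℕ) :
    c m i * i ! * (m + 1)! = (m + 1 - i) * (m + i)! := by
  induction m generalizing i with
  | zero =>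
    cases i with
    | zero => rfl
    | succ i => simp [c_eq_zero_of_lt i.succ_pos]
  | succ m ihm =>
    induction i with
    | zero => simp [c_zero_right, Nat.factorial_succ (m + 1)]
    | succ i ihi =>
      rcases lt_or_ge m i with hmi | him
      · rw [c_eq_zero_of_lt (by omega : m + 1 < i + 1), show m + 1 + 1 - (i + 1) = 0 by omega]
        simp
      obtain ⟨d, rfl⟩ := Nat.exists_eq_add_of_le him
      rw [show i + d + 1 + 1 - i = d + 2 by omega, show i + d + 1 + i = 2 * i + d + 1 by omega,
        Nat.factorial_succ (i + d + 1)] at ihi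
      have ih_prev := ihm (i + 1)
      rw [show i + d + 1 - (i + 1) = d by omega, show i + d + (i + 1) = 2 * i + d + 1 by omega,
        Nat.factorial_succ i] at ih_prev
      rw [c_succ_succ him, show i + d + 1 + 1 - (i + 1) = d + 1 by omega,
        show i + d + 1 + (i + 1) = 2 * i + d + 1 + 1 by omega, Nat.factorial_succ (2 * i + d + 1),
        Nat.factorial_succ i, Nat.factorial_succ (i + d + 1)]
      linear_combination (i + 1) * ihi + (i + d + 2) * ih_prev

theorem c_exact_formula (m i : ℕ) (h : i ≤ m) :
    (c m i : ℝ) = (((m - i + 1 : ℕ) : ℝ) / (Nat.factorial i : ℝ)) *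
      ((Nat.factorial (m + i) : ℝ) / (Nat.factorial (m + 1) : ℝ)) := by
  have key := c_mul_factorial_mul_factorial m i
  rw [Nat.sub_add_comm h, mul_assoc] at key
  rw [div_mul_div_comm, eq_div_iff (by positivity)]
  exact_mod_cast key
end

section
/- With c^m_i defined by c^0_0 = 1, c^k_i = 0 for i > k, and c^{k+1}_i = Σ_{j=0}^{i} c^k_j for i ≤ k+1, one has the bound c^m_i ≤ 4^m for all 0 ≤ i ≤ m. -/
theorem c_le_add_choose (k i : ℕ) : c k i ≤ (i + k).choose k := by
  induction k generalizing i with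
  | zero => cases i <;> simp [c]
  | succ k ih =>
    rw [c]
    split_ifs
    · calc ∑ j ∈ Finset.range (i + 1), c k j
          ≤ ∑ j ∈ Finset.range (i + 1), (j + k).choose k := Finset.sum_le_sum fun j _ => ih j
        _ = (i + (k + 1)).choose (k + 1) := Nat.sum_range_add_choose i k
    · exact Nat.zero_le _

theorem c_le_four_pow (m i : ℕ) (h : i ≤ m) : c m i ≤ 4 ^ m := by
  calc c m i ≤ (i + m).choose m := c_le_add_choose m i
    _ ≤ 2 ^ (i + m) := Nat.choose_le_two_pow _ _
    _ ≤ 2 ^ (2 * m) := Nat.pow_le_pow_right two_pos (by omega)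
    _ = 4 ^ m := by rw [pow_mul]; norm_num
end

section
/- Let f: (0,2] → [0,∞) be non-increasing and differentiable with -u f'(u) ≤ K for all u ∈ (0,2] and some K > 0. Then for every integer j ≥ 1 and w ∈ (0,1), ∫_0^{2w} f(u)^j du ≤ 2w Σ_{i=0}^{j} (j!/(j-i)!) K^i f(2w)^{j-i}. -/
/-!
Since `(u f(u)^(n+1))' = f^(n+1) + (n+1) f^n · u f' ≥ f^(n+1) - (n+1) K f^n`, on any `[a, b]` with
`0 ≤ a` one gets `∫_a^b f^(n+1) ≤ b f(b)^(n+1) + (n+1) K ∫_a^b f^n` without integrating `f'`;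
unrolling this recursion produces the falling factorials `j!/(j-i)!`. The bound on `[0, 2w]`
follows by letting `a → 0⁺`, using continuity of the integral in its lower limit. If `f^j` is
not integrable near `0`, the integral is `0` by convention and the bound is trivial.
-/

open MeasureTheory Set intervalIntegral

theorem Nat.cast_factorial_div_factorial_sub {R : Type*} [Field R] [CharZero R] {n k : ℕ}
    (h : k ≤ n) : ((n.factorial : R) / ((n - k).factorial : R)) = n.descFactorial k := by
  rw [div_eq_iff (Nat.cast_ne_zero.2 (Nat.factorial_ne_zero _)),
    ← Nat.factorial_mul_descFactorial h]
  push_cast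
  ring

theorem sum_descFactorial_mul_pow_succ {R : Type*} [CommSemiring R] (n : ℕ) (K y : R) :
    ∑ i ∈ Finset.range (n + 2), ((n + 1).descFactorial i : R) * K ^ i * y ^ (n + 1 - i) =
      y ^ (n + 1) + (n + 1) * K *
        ∑ i ∈ Finset.range (n + 1), (n.descFactorial i : R) * K ^ i * y ^ (n - i) := by
  rw [Finset.sum_range_succ', Finset.mul_sum, add_comm]
  simp only [Nat.succ_descFactorial_succ, Nat.add_sub_add_right, Nat.descFactorial_zero]
  push_cast
  congr 1
  · simp
  · exact Finset.sum_congr rfl fun i _ => by ring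

theorem le_mul_sum_descFactorial_of_le_succ {I : ℕ → ℝ} {b K y : ℝ} (hK : 0 ≤ K)
    (h0 : I 0 ≤ b) (hsucc : ∀ n : ℕ, I (n + 1) ≤ b * y ^ (n + 1) + (n + 1) * K * I n) (n : ℕ) :
    I n ≤ b * ∑ i ∈ Finset.range (n + 1), (n.descFactorial i : ℝ) * K ^ i * y ^ (n - i) := by
  induction n with
  | zero => simpa using h0
  | succ n ih =>
    calc I (n + 1) ≤ b * y ^ (n + 1) + (n + 1) * K * I n := hsucc n
      _ ≤ b * y ^ (n + 1) + (n + 1) * K * (b * ∑ i ∈ Finset.range (n + 1),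
            (n.descFactorial i : ℝ) * K ^ i * y ^ (n - i)) := by gcongr
      _ = _ := by rw [sum_descFactorial_mul_pow_succ]; ring

theorem integral_pow_succ_le {f f' : ℝ → ℝ} {a b K : ℝ} (ha : 0 ≤ a) (hab : a ≤ b)
    (hcont : ContinuousOn f (Icc a b)) (hderiv : ∀ x ∈ Ioo a b, HasDerivAt f (f' x) x)
    (hnonneg : ∀ x ∈ Icc a b, 0 ≤ f x) (hbound : ∀ x ∈ Ioo a b, -x * f' x ≤ K) (n : ℕ) :
    ∫ x in a..b, f x ^ (n + 1) ≤ b * f b ^ (n + 1) + (n + 1) * K * ∫ x in a..b, f x ^ n := by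
  have hint : ∀ m : ℕ, IntervalIntegrable (fun x => f x ^ m) volume a b := fun m =>
    (hcont.pow m).intervalIntegrable_of_Icc hab
  have hderiv_mul : ∀ x ∈ Ioo a b, HasDerivAt (fun x => x * f x ^ (n + 1))
      (f x ^ (n + 1) + (n + 1) * f x ^ n * (x * f' x)) x := fun x hx => by
    refine ((hasDerivAt_id' x).mul ((hderiv x hx).fun_pow (n + 1))).congr_deriv ?_
    push_cast
    ring
  have hle_deriv : ∀ x ∈ Ioo a b, f x ^ (n + 1) - (n + 1) * K * f x ^ n ≤
      f x ^ (n + 1) + (n + 1) * f x ^ n * (x * f' x) := fun x hx => by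
    have hcoef : 0 ≤ (n + 1 : ℝ) * f x ^ n :=
      mul_nonneg (by positivity) (pow_nonneg (hnonneg x (Ioo_subset_Icc_self hx)) n)
    nlinarith [mul_le_mul_of_nonneg_left (hbound x hx) hcoef]
  have hibp := integral_le_sub_of_hasDeriv_right_of_le (g := fun x => x * f x ^ (n + 1))
    (φ := fun x => f x ^ (n + 1) - (n + 1) * K * f x ^ n) hab
    (continuousOn_id.mul (hcont.pow (n + 1))) (fun x hx => (hderiv_mul x hx).hasDerivWithinAt)
    ((hcont.pow (n + 1)).sub (continuousOn_const.mul (hcont.pow n))).integrableOn_Icc hle_deriv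
  rw [integral_sub (hint (n + 1)) ((hint n).const_mul _),
    intervalIntegral.integral_const_mul] at hibp
  have : 0 ≤ a * f a ^ (n + 1) := mul_nonneg ha (pow_nonneg (hnonneg a ⟨le_rfl, hab⟩) _)
  linarith

theorem integral_pow_le_mul_sum_descFactorial {f f' : ℝ → ℝ} {a b K : ℝ} (ha : 0 ≤ a)
    (hab : a ≤ b) (hK : 0 ≤ K) (hcont : ContinuousOn f (Icc a b))
    (hderiv : ∀ x ∈ Ioo a b, HasDerivAt f (f' x) x) (hnonneg : ∀ x ∈ Icc a b, 0 ≤ f x)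
    (hbound : ∀ x ∈ Ioo a b, -x * f' x ≤ K) (n : ℕ) :
    ∫ x in a..b, f x ^ n ≤
      b * ∑ i ∈ Finset.range (n + 1), (n.descFactorial i : ℝ) * K ^ i * f b ^ (n - i) :=
  le_mul_sum_descFactorial_of_le_succ (I := fun n => ∫ x in a..b, f x ^ n) hK
    (by simpa using ha)
    (integral_pow_succ_le ha hab hcont hderiv hnonneg hbound) n

theorem integral_le_of_forall_mem_Ioo_integral_le {g : ℝ → ℝ} {a b C : ℝ} (hab : a < b)
    (hg : IntervalIntegrable g volume a b) (h : ∀ c ∈ Ioo a b, ∫ x in c..b, g x ≤ C) :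
    ∫ x in a..b, g x ≤ C := by
  have hcont : ContinuousOn (fun c => ∫ x in c..b, g x) (Icc a b) := by
    rw [← uIcc_of_le hab.le]
    apply continuousOn_primitive_interval_left
    rw [uIcc_of_le hab.le]
    exact (intervalIntegrable_iff_integrableOn_Icc_of_le hab.le).mp hg
  have ha : a ∈ closure (Ioo a b) := by
    rw [closure_Ioo hab.ne]
    exact left_mem_Icc.2 hab.le
  exact ((hcont a (left_mem_Icc.2 hab.le)).mono Ioo_subset_Icc_self).closure_le ha
    continuousWithinAt_const h

theorem iterated_ibp_bound_general (f f' : ℝ → ℝ)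
    (hf_nonneg : ∀ x ∈ Set.Ioc (0:ℝ) 2, 0 ≤ f x)
    (hf_deriv : ∀ x ∈ Set.Ioc (0:ℝ) 2, HasDerivAt f (f' x) x)
    (K : ℝ) (hK : 0 < K)
    (hbound : ∀ x ∈ Set.Ioc (0:ℝ) 2, -x * f' x ≤ K)
    (j : ℕ) (w : ℝ) (hw : w ∈ Set.Ioo (0:ℝ) 1) :
    (∫ u in (0:ℝ)..(2*w), f u ^ j) ≤
      2 * w * ∑ i ∈ Finset.range (j + 1),
        ((Nat.factorial j : ℝ) / (Nat.factorial (j - i) : ℝ)) * K ^ i * f (2*w) ^ (j - i) := by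
  obtain ⟨hw0, hw1⟩ := hw
  have hb : 0 < 2 * w := by positivity
  have hIcc : ∀ a ∈ Ioo 0 (2 * w), Icc a (2 * w) ⊆ Ioc 0 2 := fun a ha x hx =>
    ⟨ha.1.trans_le hx.1, by linarith [hx.2]⟩
  rw [Finset.sum_congr rfl fun i hi => by
    rw [Nat.cast_factorial_div_factorial_sub (Finset.mem_range_succ_iff.1 hi)]]
  by_cases hint : IntervalIntegrable (fun u => f u ^ j) volume 0 (2 * w)
  · refine integral_le_of_forall_mem_Ioo_integral_le hb hint fun a ha => ?_
    exact integral_pow_le_mul_sum_descFactorial ha.1.le ha.2.le hK.le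
      (fun x hx => (hf_deriv x (hIcc a ha hx)).continuousAt.continuousWithinAt)
      (fun x hx => hf_deriv x (hIcc a ha (Ioo_subset_Icc_self hx)))
      (fun x hx => hf_nonneg x (hIcc a ha hx))
      (fun x hx => hbound x (hIcc a ha (Ioo_subset_Icc_self hx))) j
  · have hfb : 0 ≤ f (2 * w) := hf_nonneg _ ⟨hb, by linarith⟩
    rw [integral_undef hint]
    positivity

theorem iterated_ibp_bound (f f' : ℝ → ℝ)
    (hf_nonneg : ∀ x ∈ Set.Ioc (0:ℝ) 2, 0 ≤ f x)
    (hf_mono : AntitoneOn f (Set.Ioc (0:ℝ) 2))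
    (hf_deriv : ∀ x ∈ Set.Ioc (0:ℝ) 2, HasDerivAt f (f' x) x)
    (K : ℝ) (hK : 0 < K)
    (hbound : ∀ x ∈ Set.Ioc (0:ℝ) 2, -x * f' x ≤ K)
    (j : ℕ) (hj : 1 ≤ j) (w : ℝ) (hw : w ∈ Set.Ioo (0:ℝ) 1) :
    (∫ u in (0:ℝ)..(2*w), f u ^ j) ≤
      2 * w * ∑ i ∈ Finset.range (j + 1),
        ((Nat.factorial j : ℝ) / (Nat.factorial (j - i) : ℝ)) * K ^ i * f (2*w) ^ (j - i) :=
  iterated_ibp_bound_general f f' hf_nonneg hf_deriv K hK hbound j w hw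
end

section
/- Let F be non-negative and non-increasing on (0,2] with F(w) ≤ 2/(w log λ) for all w > 0, where λ > 1, and set f(w) := ∫_w^2 F(v) dv. Then for every integer j ≥ 0 and w ∈ (0,1): ∫_0^2 F(u+w) f(u)^j du ≤ Σ_{ℓ=0}^{j+1} (j!/(j+1-ℓ)!) (4/log λ)^ℓ f(2w)^{j+1-ℓ}. -/
/-!
Split `[0, 2]` at `2w`. On `(0, 2w]` use `F (u + w) ≤ 2 / ((u + w) log λ)` and
`f u ≤ f (2w) + (2 / log λ) log (2w / u)`; expanding binomially, the moments
`∫_0^{2w} log (2w / u) ^ i du = 2w · i!` give the terms `l ≥ 1` of the bound. For `i = 0` the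
sharper `∫_0^{2w} du / (u + w) = log 3 < 3/2` leaves a surplus `f (2w) ^ j / log λ`.
On `[2w, 2 - w]` monotonicity gives `F (u + w) ≤ F u = -f' u`, so the chain rule bounds that part
by `f (2w) ^ (j + 1) / (j + 1)`, the term `l = 0`; on the remaining piece, of length at most `w`,
`F (u + w) ≤ 1 / log λ`, and it is paid for by the surplus.
-/

open MeasureTheory Set intervalIntegral Real
open scoped Nat

section AntitonePrimitive

variable {F : ℝ → ℝ} {a b c : ℝ}

theorem AntitoneOn.intervalIntegrable_of_Ioc (hF : AntitoneOn F (Ioc 0 c)) (ha : 0 < a)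
    (hab : a ≤ b) (hbc : b ≤ c) : IntervalIntegrable F volume a b :=
  (hF.mono fun x hx => by
    rw [uIcc_of_le hab] at hx
    exact ⟨ha.trans_le hx.1, hx.2.trans hbc⟩).intervalIntegrable

theorem AntitoneOn.continuousOn_integral_left (hF : AntitoneOn F (Icc a c)) :
    ContinuousOn (fun u => ∫ v in u..c, F v) (Icc a c) := by
  rcases le_total a c with hac | hca
  · rw [← uIcc_of_le hac] at hF ⊢
    exact continuousOn_primitive_interval_left (hF.integrableOn_isCompact isCompact_uIcc)
  · exact (subsingleton_Icc_of_ge hca).continuousOn _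

theorem AntitoneOn.intervalIntegrable_mul_integral_pow (hF : AntitoneOn F (Icc a c))
    (hab : a ≤ b) (hbc : b ≤ c) (j : ℕ) :
    IntervalIntegrable (fun u => F u * (∫ v in u..c, F v) ^ j) volume a b := by
  have hsub : uIcc a b ⊆ Icc a c := by rw [uIcc_of_le hab]; exact Icc_subset_Icc_right hbc
  exact (hF.mono hsub).intervalIntegrable.mul_continuousOn
    ((hF.continuousOn_integral_left.mono hsub).pow j)

theorem AntitoneOn.hasDerivAt_integral_left (hF : AntitoneOn F (Icc a c)) {x : ℝ}
    (hx : x ∈ Ioo a c) (hFx : ContinuousAt F x) :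
    HasDerivAt (fun u => ∫ v in u..c, F v) (-F x) x := by
  refine integral_hasDerivAt_left ?_ ?_ hFx
  · refine (hF.mono ?_).intervalIntegrable
    rw [uIcc_of_le hx.2.le]
    exact Icc_subset_Icc_left hx.1.le
  · exact AEStronglyMeasurable.stronglyMeasurableAtFilter_of_mem
      (hF.integrableOn_isCompact isCompact_Icc).aestronglyMeasurable (Icc_mem_nhds hx.1 hx.2)

/-- The chain rule holds at every continuity point of `F`, and an antitone function has only
countably many discontinuities. -/
theorem AntitoneOn.integral_mul_integral_pow (hF : AntitoneOn F (Icc a c)) (hab : a ≤ b)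
    (hbc : b ≤ c) (j : ℕ) :
    ∫ u in a..b, F u * (∫ v in u..c, F v) ^ j =
      ((∫ v in a..c, F v) ^ (j + 1) - (∫ v in b..c, F v) ^ (j + 1)) / (j + 1) := by
  set G : ℝ → ℝ := fun u => ∫ v in u..c, F v
  have hG : ContinuousOn G (Icc a b) :=
    hF.continuousOn_integral_left.mono (Icc_subset_Icc_right hbc)
  have hderiv : ∀ x ∈ Ioo a b \ {x ∈ Icc a c | ¬ContinuousWithinAt F (Icc a c) x},
      HasDerivAt (fun u => -G u ^ (j + 1) / (j + 1)) (F x * G x ^ j) x := by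
    rintro x ⟨hx, hxF⟩
    have hxc : x ∈ Ioo a c := ⟨hx.1, hx.2.trans_le hbc⟩
    have hFx : ContinuousAt F x := by
      by_contra h
      exact hxF ⟨Ioo_subset_Icc_self hxc,
        fun h' => h (h'.continuousAt (Icc_mem_nhds hxc.1 hxc.2))⟩
    refine (((hF.hasDerivAt_integral_left hxc hFx).fun_pow (j + 1)).fun_neg.div_const
      ((j : ℝ) + 1)).congr_deriv ?_
    push_cast
    field_simp
    exact mul_comm _ _
  rw [integral_eq_of_hasDerivAt_off_countable_of_le (fun u => -G u ^ (j + 1) / (j + 1)) _ hab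
    hF.countable_not_continuousWithinAt (by fun_prop) hderiv
    (hF.intervalIntegrable_mul_integral_pow hab hbc j)]
  ring

end AntitonePrimitive

theorem integral_log_sub_pow_succ {ε b : ℝ} (hε : 0 < ε) (hεb : ε ≤ b) (m : ℕ) :
    ∫ u in ε..b, (log b - log u) ^ (m + 1) =
      (m + 1) * (∫ u in ε..b, (log b - log u) ^ m) - ε * (log b - log ε) ^ (m + 1) := by
  have hpos : ∀ u ∈ uIcc ε b, u ≠ 0 := fun u hu =>
    (hε.trans_le (by rw [uIcc_of_le hεb] at hu; exact hu.1)).ne'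
  have hint : ∀ n : ℕ, IntervalIntegrable (fun u => (log b - log u) ^ n) volume ε b := fun n =>
    ((continuousOn_const.sub (continuousOn_log.mono hpos)).pow n).intervalIntegrable
  have hderiv : ∀ u ∈ uIcc ε b, HasDerivAt (fun u => u * (log b - log u) ^ (m + 1))
      ((log b - log u) ^ (m + 1) - (m + 1) * (log b - log u) ^ m) u := by
    intro u hu
    refine ((hasDerivAt_id' u).fun_mul
      (((hasDerivAt_log (hpos u hu)).const_sub (log b)).fun_pow (m + 1))).congr_deriv ?_
    field_simp [hpos u hu]
    push_cast
    ring
  have hFTC := integral_eq_sub_of_hasDerivAt hderiv ((hint _).sub ((hint m).const_mul _))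
  rw [integral_sub (hint _) ((hint m).const_mul _), intervalIntegral.integral_const_mul, sub_self,
    zero_pow (Nat.succ_ne_zero m), mul_zero, zero_sub] at hFTC
  linarith

theorem integral_log_sub_pow_le {ε b : ℝ} (hε : 0 < ε) (hεb : ε ≤ b) (m : ℕ) :
    ∫ u in ε..b, (log b - log u) ^ m ≤ b * m ! := by
  induction m with
  | zero => simpa using hε.le
  | succ m ih =>
    have hrem : 0 ≤ ε * (log b - log ε) ^ (m + 1) := by
      have : 0 ≤ log b - log ε := sub_nonneg.2 (log_le_log hε hεb)
      positivity
    have := mul_le_mul_of_nonneg_left ih (by positivity : (0 : ℝ) ≤ m + 1)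
    rw [integral_log_sub_pow_succ hε hεb, Nat.factorial_succ]
    push_cast
    linarith

theorem integral_one_div_add_le_three_halves {ε w : ℝ} (hε : 0 < ε) (hεw : ε ≤ 2 * w) :
    ∫ u in ε..2 * w, 1 / (u + w) ≤ 3 / 2 := by
  have hw : 0 < w := by linarith
  rw [integral_comp_add_right (fun u => 1 / u), integral_one_div_of_pos (by linarith) (by linarith)]
  calc log ((2 * w + w) / (ε + w)) ≤ log 3 := by
        gcongr
        rw [div_le_iff₀ (by linarith)]
        linarith
    _ ≤ 3 / 2 := by linarith [log_three_lt_d9]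

theorem integral_log_sub_pow_div_add_le {ε w : ℝ} (hε : 0 < ε) (hεw : ε ≤ 2 * w)
    (i : ℕ) :
    ∫ u in ε..2 * w, (log (2 * w) - log u) ^ i / (u + w) ≤ 2 * i ! := by
  have hw : 0 < w := by linarith
  have hpos : ∀ u ∈ uIcc ε (2 * w), 0 < u := fun u hu =>
    hε.trans_le (by rw [uIcc_of_le hεw] at hu; exact hu.1)
  have hlog : ContinuousOn (fun u => (log (2 * w) - log u) ^ i) (uIcc ε (2 * w)) :=
    (continuousOn_const.sub (continuousOn_log.mono fun u hu => (hpos u hu).ne')).pow i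
  calc ∫ u in ε..2 * w, (log (2 * w) - log u) ^ i / (u + w)
      ≤ ∫ u in ε..2 * w, (log (2 * w) - log u) ^ i / w := by
        refine integral_mono_on hεw ?_ ?_ fun u hu => ?_
        · exact (hlog.div (continuousOn_id.add continuousOn_const) fun u hu =>
            (add_pos (hpos u hu) hw).ne').intervalIntegrable
        · exact (hlog.div_const w).intervalIntegrable
        · have hu0 : 0 < u := hpos u (Icc_subset_uIcc hu)
          have : 0 ≤ log (2 * w) - log u := sub_nonneg.2 (log_le_log hu0 hu.2)
          gcongr
          linarith
    _ = (∫ u in ε..2 * w, (log (2 * w) - log u) ^ i) / w := integral_div _ _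
    _ ≤ 2 * w * i ! / w := by gcongr; exact integral_log_sub_pow_le hε hεw i
    _ = 2 * i ! := by field_simp

theorem integral_le_of_forall_pos_integral_le {g : ℝ → ℝ} {c B : ℝ} (hc : 0 < c)
    (hg : IntervalIntegrable g volume 0 c) (h : ∀ ε ∈ Ioo 0 c, ∫ u in ε..c, g u ≤ B) :
    ∫ u in 0..c, g u ≤ B := by
  have hcont := continuousOn_primitive_interval_left
    ((intervalIntegrable_iff_integrableOn_Icc_of_le hc.le).1 hg
      |>.mono_set (uIcc_of_le hc.le).subset)
  have h0 : ContinuousWithinAt (fun x => ∫ t in x..c, g t) (Ioo 0 c) 0 :=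
    (hcont 0 left_mem_uIcc).mono (Ioo_subset_Icc_self.trans (uIcc_of_le hc.le).symm.subset)
  have := left_nhdsWithin_Ioo_neBot hc
  exact le_of_tendsto h0.tendsto (eventually_nhdsWithin_of_forall h)

theorem choose_mul_factorial_eq_div {j i : ℕ} (hij : i ≤ j) :
    (j.choose i : ℝ) * i ! = j ! / (j - i)! := by
  rw [Nat.cast_choose ℝ hij]
  field_simp

theorem sum_range_succ_factorial_div_mul_pow (j : ℕ) (x a : ℝ) :
    ∑ l ∈ Finset.range (j + 2), (j ! / (j + 1 - l)! : ℝ) * x ^ l * a ^ (j + 1 - l) =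
      a ^ (j + 1) / (j + 1) +
        ∑ i ∈ Finset.range (j + 1), (j ! / (j - i)! : ℝ) * x ^ (i + 1) * a ^ (j - i) := by
  rw [Finset.sum_range_succ', add_comm]
  congr 1
  · rw [Nat.sub_zero, Nat.factorial_succ, Nat.cast_mul, pow_zero]
    field_simp
    push_cast
    ring
  · simp only [Nat.add_sub_add_right]

section Primitive

variable {F f : ℝ → ℝ} {L a b w : ℝ}

theorem sub_eq_integral_of_primitive (hF_mono : AntitoneOn F (Ioc 0 2))
    (hf : ∀ w, f w = ∫ v in w..2, F v) (ha : 0 < a) (hab : a ≤ b) (hb : b ≤ 2) :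
    f a - f b = ∫ v in a..b, F v := by
  rw [hf, hf, ← integral_add_adjacent_intervals (hF_mono.intervalIntegrable_of_Ioc ha hab hb)
    (hF_mono.intervalIntegrable_of_Ioc (ha.trans_le hab) hb le_rfl)]
  ring

theorem primitive_le_of_le (hF_nonneg : ∀ x, 0 < x → 0 ≤ F x)
    (hF_mono : AntitoneOn F (Ioc 0 2)) (hf : ∀ w, f w = ∫ v in w..2, F v) (ha : 0 < a)
    (hab : a ≤ b) (hb : b ≤ 2) : f b ≤ f a := by
  have := integral_nonneg (μ := volume) hab fun x hx => hF_nonneg x (ha.trans_le hx.1)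
  linarith [sub_eq_integral_of_primitive hF_mono hf ha hab hb]

theorem primitive_nonneg (hF_nonneg : ∀ x, 0 < x → 0 ≤ F x) (hF_mono : AntitoneOn F (Ioc 0 2))
    (hf : ∀ w, f w = ∫ v in w..2, F v) (ha : 0 < a) (ha2 : a ≤ 2) : 0 ≤ f a := by
  simpa [hf 2] using primitive_le_of_le hF_nonneg hF_mono hf ha ha2 le_rfl

theorem primitive_le_add_log (hF_mono : AntitoneOn F (Ioc 0 2))
    (hF_bound : ∀ x, 0 < x → F x ≤ 2 / (x * L)) (hf : ∀ w, f w = ∫ v in w..2, F v)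
    (ha : 0 < a) (hab : a ≤ b) (hb : b ≤ 2) :
    f a ≤ f b + 2 / L * (log b - log a) := by
  have hpos : ∀ x ∈ uIcc a b, 0 < x := fun x hx =>
    ha.trans_le (by rw [uIcc_of_le hab] at hx; exact hx.1)
  have hle : ∫ v in a..b, F v ≤ ∫ v in a..b, 2 / L * v⁻¹ := by
    refine integral_mono_on hab (hF_mono.intervalIntegrable_of_Ioc ha hab hb)
      (continuousOn_const.mul (continuousOn_inv₀.mono fun x hx => (hpos x hx).ne')
        |>.intervalIntegrable)
      fun x hx => ?_
    calc F x ≤ 2 / (x * L) := hF_bound x (hpos x (Icc_subset_uIcc hx))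
      _ = 2 / L * x⁻¹ := by rw [mul_comm x, ← div_div]; ring
  rw [intervalIntegral.integral_const_mul, integral_inv_of_pos ha (ha.trans_le hab),
    log_div (ha.trans_le hab).ne' ha.ne'] at hle
  linarith [sub_eq_integral_of_primitive hF_mono hf ha hab hb]

theorem binomial_term_integral_le (hL : 0 < L) (ha : 0 ≤ a) {ε : ℝ} (hε : 0 < ε)
    (hεw : ε ≤ 2 * w) {i j : ℕ} (hij : i ≤ j) :
    (j.choose i * (2 / L) ^ i * a ^ (j - i) * (2 / L)) *
        ∫ u in ε..2 * w, (log (2 * w) - log u) ^ i / (u + w) ≤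
      (j ! / (j - i)! : ℝ) * (4 / L) ^ (i + 1) * a ^ (j - i) -
        if i = 0 then a ^ j / L else 0 := by
  rcases eq_or_ne i 0 with rfl | hi0
  · simp only [pow_zero, Nat.choose_zero_right, Nat.cast_one, Nat.sub_zero, zero_add, pow_one,
      if_true]
    calc 1 * 1 * a ^ j * (2 / L) * ∫ u in ε..2 * w, 1 / (u + w)
        ≤ 1 * 1 * a ^ j * (2 / L) * (3 / 2) := by
          gcongr; exact integral_one_div_add_le_three_halves hε hεw
      _ = (j ! / j ! : ℝ) * (4 / L) * a ^ j - a ^ j / L := by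
          rw [div_self (by positivity)]
          ring
  · rw [if_neg hi0, sub_zero]
    calc (j.choose i * (2 / L) ^ i * a ^ (j - i) * (2 / L)) *
          ∫ u in ε..2 * w, (log (2 * w) - log u) ^ i / (u + w)
        ≤ (j.choose i * (2 / L) ^ i * a ^ (j - i) * (2 / L)) * (2 * i !) := by
          gcongr; exact integral_log_sub_pow_div_add_le hε hεw i
      _ = (j ! / (j - i)! : ℝ) * (2 / L) ^ i * (4 / L) * a ^ (j - i) := by
          rw [← choose_mul_factorial_eq_div hij]
          ring
      _ ≤ (j ! / (j - i)! : ℝ) * (4 / L) ^ i * (4 / L) * a ^ (j - i) := by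
          gcongr
          norm_num
      _ = (j ! / (j - i)! : ℝ) * (4 / L) ^ (i + 1) * a ^ (j - i) := by ring

theorem shift_mul_primitive_pow_le_sum (hF_nonneg : ∀ x, 0 < x → 0 ≤ F x)
    (hF_mono : AntitoneOn F (Ioc 0 2)) (hF_bound : ∀ x, 0 < x → F x ≤ 2 / (x * L))
    (hf : ∀ w, f w = ∫ v in w..2, F v) (hL : 0 < L) (hw1 : w < 1) {u : ℝ} (hu0 : 0 < u)
    (hu : u ≤ 2 * w) (j : ℕ) :
    F (u + w) * f u ^ j ≤
      ∑ i ∈ Finset.range (j + 1), (j.choose i * (2 / L) ^ i * f (2 * w) ^ (j - i) * (2 / L)) *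
        ((log (2 * w) - log u) ^ i / (u + w)) := by
  have hw : 0 < w := by linarith
  have hfu : f u ≤ 2 / L * (log (2 * w) - log u) + f (2 * w) := by
    rw [add_comm]; exact primitive_le_add_log hF_mono hF_bound hf hu0 hu (by linarith)
  have hf0 : 0 ≤ f u := primitive_nonneg hF_nonneg hF_mono hf hu0 (by linarith)
  calc F (u + w) * f u ^ j
      ≤ 2 / ((u + w) * L) * (2 / L * (log (2 * w) - log u) + f (2 * w)) ^ j :=
        mul_le_mul (hF_bound _ (by positivity)) (pow_le_pow_left₀ hf0 hfu j) (by positivity)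
          (by positivity)
    _ = _ := by
        rw [add_pow, Finset.mul_sum]
        refine Finset.sum_congr rfl fun i _ => ?_
        rw [mul_pow]
        field_simp

theorem integral_head_le_of_pos (hF_nonneg : ∀ x, 0 < x → 0 ≤ F x)
    (hF_mono : AntitoneOn F (Ioc 0 2)) (hF_bound : ∀ x, 0 < x → F x ≤ 2 / (x * L))
    (hf : ∀ w, f w = ∫ v in w..2, F v) (hL : 0 < L) (hw1 : w < 1) {ε : ℝ} (hε : 0 < ε)
    (hεw : ε ≤ 2 * w) (j : ℕ)
    (hint : IntervalIntegrable (fun u => F (u + w) * f u ^ j) volume ε (2 * w)) :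
    ∫ u in ε..2 * w, F (u + w) * f u ^ j ≤
      ∑ i ∈ Finset.range (j + 1),
          (j ! / (j - i)! : ℝ) * (4 / L) ^ (i + 1) * f (2 * w) ^ (j - i) - f (2 * w) ^ j / L := by
  have hw : 0 < w := by linarith
  have ha : 0 ≤ f (2 * w) := primitive_nonneg hF_nonneg hF_mono hf (by linarith) (by linarith)
  set a := f (2 * w)
  have hpos : ∀ u ∈ uIcc ε (2 * w), 0 < u := fun u hu =>
    hε.trans_le (by rw [uIcc_of_le hεw] at hu; exact hu.1)
  have hterm : ∀ i : ℕ,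
      ContinuousOn (fun u => (log (2 * w) - log u) ^ i / (u + w)) (uIcc ε (2 * w)) := fun i =>
    ((continuousOn_const.sub (continuousOn_log.mono fun u hu => (hpos u hu).ne')).pow i).div
      (continuousOn_id.add continuousOn_const) fun u hu => (add_pos (hpos u hu) hw).ne'
  calc ∫ u in ε..2 * w, F (u + w) * f u ^ j
      ≤ ∫ u in ε..2 * w, ∑ i ∈ Finset.range (j + 1),
          (j.choose i * (2 / L) ^ i * a ^ (j - i) * (2 / L)) *
            ((log (2 * w) - log u) ^ i / (u + w)) :=
        integral_mono_on hεw hint (ContinuousOn.intervalIntegrable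
          (continuousOn_finsetSum _ fun i _ => continuousOn_const.mul (hterm i))) fun u hu =>
          shift_mul_primitive_pow_le_sum hF_nonneg hF_mono hF_bound hf hL hw1
            (hpos u (Icc_subset_uIcc hu)) hu.2 j
    _ = ∑ i ∈ Finset.range (j + 1), (j.choose i * (2 / L) ^ i * a ^ (j - i) * (2 / L)) *
          ∫ u in ε..2 * w, (log (2 * w) - log u) ^ i / (u + w) := by
        rw [integral_finsetSum fun i _ => (hterm i).intervalIntegrable.const_mul _]
        simp only [intervalIntegral.integral_const_mul]
    _ ≤ _ := Finset.sum_le_sum fun i hi =>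
        binomial_term_integral_le hL ha hε hεw (Finset.mem_range_succ_iff.1 hi)
    _ = _ := by rw [Finset.sum_sub_distrib, Finset.sum_ite_eq' _ 0]; simp

theorem integral_head_le (hF_nonneg : ∀ x, 0 < x → 0 ≤ F x)
    (hF_mono : AntitoneOn F (Ioc 0 2)) (hF_bound : ∀ x, 0 < x → F x ≤ 2 / (x * L))
    (hf : ∀ w, f w = ∫ v in w..2, F v) (hL : 0 < L) (hw0 : 0 < w) (hw1 : w < 1) (j : ℕ)
    (hint : IntervalIntegrable (fun u => F (u + w) * f u ^ j) volume 0 (2 * w)) :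
    ∫ u in 0..2 * w, F (u + w) * f u ^ j ≤
      ∑ i ∈ Finset.range (j + 1),
          (j ! / (j - i)! : ℝ) * (4 / L) ^ (i + 1) * f (2 * w) ^ (j - i) - f (2 * w) ^ j / L :=
  integral_le_of_forall_pos_integral_le (by linarith) hint fun ε hε =>
    integral_head_le_of_pos hF_nonneg hF_mono hF_bound hf hL hw1 hε.1 hε.2.le j
      (hint.mono_set (uIcc_subset_uIcc (mem_uIcc_of_le hε.1.le hε.2.le) right_mem_uIcc))

theorem integral_shift_mul_pow_le (hF_nonneg : ∀ x, 0 < x → 0 ≤ F x)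
    (hF_mono : AntitoneOn F (Ioc 0 2)) (hf : ∀ w, f w = ∫ v in w..2, F v) (hw : 0 ≤ w)
    (ha : 0 < a) (hab : a ≤ b) (hbw : b + w ≤ 2) (j : ℕ)
    (hint : IntervalIntegrable (fun u => F (u + w) * f u ^ j) volume a b) :
    ∫ u in a..b, F (u + w) * f u ^ j ≤ f a ^ (j + 1) / (j + 1) := by
  have hb2 : b ≤ 2 := by linarith
  have hF : AntitoneOn F (Icc a 2) := hF_mono.mono fun u hu => ⟨ha.trans_le hu.1, hu.2⟩
  have hchain := hF.integral_mul_integral_pow hab hb2 j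
  have hint' := hF.intervalIntegrable_mul_integral_pow hab hb2 j
  simp only [← hf] at hchain hint'
  have hf0 : ∀ u ∈ Icc a 2, 0 ≤ f u := fun u hu =>
    primitive_nonneg hF_nonneg hF_mono hf (ha.trans_le hu.1) hu.2
  calc ∫ u in a..b, F (u + w) * f u ^ j ≤ ∫ u in a..b, F u * f u ^ j := by
        refine integral_mono_on hab hint hint' fun u hu => ?_
        gcongr
        · exact pow_nonneg (hf0 u ⟨hu.1, by linarith [hu.2]⟩) j
        · exact hF ⟨hu.1, by linarith [hu.2]⟩ ⟨by linarith [hu.1], by linarith [hu.2]⟩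
            (by linarith)
    _ = (f a ^ (j + 1) - f b ^ (j + 1)) / (j + 1) := hchain
    _ ≤ f a ^ (j + 1) / (j + 1) := by
        have := pow_nonneg (hf0 b ⟨hab, hb2⟩) (j + 1)
        gcongr
        linarith

theorem integral_shift_mul_pow_le_of_two_le_add (hF_nonneg : ∀ x, 0 < x → 0 ≤ F x)
    (hF_mono : AntitoneOn F (Ioc 0 2)) (hF_bound : ∀ x, 0 < x → F x ≤ 2 / (x * L))
    (hf : ∀ w, f w = ∫ v in w..2, F v) (hL : 0 < L) (hw0 : 0 < w) (hw1 : w < 1) {q : ℝ}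
    (h2wq : 2 * w ≤ q) (hqw : 2 ≤ q + w) (hq2 : q ≤ 2) (j : ℕ)
    (hint : IntervalIntegrable (fun u => F (u + w) * f u ^ j) volume q 2) :
    ∫ u in q..2, F (u + w) * f u ^ j ≤ f (2 * w) ^ j / L := by
  have ha : 0 ≤ f (2 * w) := primitive_nonneg hF_nonneg hF_mono hf (by linarith) (by linarith)
  calc ∫ u in q..2, F (u + w) * f u ^ j ≤ ∫ u in q..2, f (2 * w) ^ j / L := by
        refine integral_mono_on hq2 hint intervalIntegrable_const fun u hu => ?_
        have hFu : F (u + w) ≤ 1 / L := by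
          calc F (u + w) ≤ 2 / ((u + w) * L) := hF_bound _ (by linarith [hu.1])
            _ ≤ 2 / (2 * L) := by
              gcongr
              linarith [hu.1]
            _ = 1 / L := by field_simp
        have hfu : f u ≤ f (2 * w) :=
          primitive_le_of_le hF_nonneg hF_mono hf (by linarith) (by linarith [hu.1]) hu.2
        have hfu0 : 0 ≤ f u := primitive_nonneg hF_nonneg hF_mono hf (by linarith [hu.1]) hu.2
        calc F (u + w) * f u ^ j ≤ 1 / L * f (2 * w) ^ j :=
              mul_le_mul hFu (pow_le_pow_left₀ hfu0 hfu j) (by positivity) (by positivity)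
          _ = f (2 * w) ^ j / L := by ring
    _ = (2 - q) * (f (2 * w) ^ j / L) := by rw [intervalIntegral.integral_const, smul_eq_mul]
    _ ≤ 1 * (f (2 * w) ^ j / L) := by
        gcongr
        linarith
    _ = f (2 * w) ^ j / L := one_mul _

theorem integral_tail_le (hF_nonneg : ∀ x, 0 < x → 0 ≤ F x)
    (hF_mono : AntitoneOn F (Ioc 0 2)) (hF_bound : ∀ x, 0 < x → F x ≤ 2 / (x * L))
    (hf : ∀ w, f w = ∫ v in w..2, F v) (hL : 0 < L) (hw0 : 0 < w) (hw1 : w < 1) (j : ℕ)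
    (hint : IntervalIntegrable (fun u => F (u + w) * f u ^ j) volume (2 * w) 2) :
    ∫ u in 2 * w..2, F (u + w) * f u ^ j ≤
      f (2 * w) ^ (j + 1) / (j + 1) + f (2 * w) ^ j / L := by
  rcases le_total (2 * w) (2 - w) with h | h
  · have hq : 2 - w ∈ uIcc (2 * w) 2 := mem_uIcc_of_le h (by linarith)
    have hleft := hint.mono_set (uIcc_subset_uIcc left_mem_uIcc hq)
    have hright := hint.mono_set (uIcc_subset_uIcc hq right_mem_uIcc)
    rw [← integral_add_adjacent_intervals hleft hright]
    exact add_le_add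
      (integral_shift_mul_pow_le hF_nonneg hF_mono hf hw0.le (by linarith) h (by linarith) j hleft)
      (integral_shift_mul_pow_le_of_two_le_add hF_nonneg hF_mono hF_bound hf hL hw0 hw1 h
        (by linarith) (by linarith) j hright)
  · have := integral_shift_mul_pow_le_of_two_le_add hF_nonneg hF_mono hF_bound hf hL hw0 hw1 le_rfl
      (by linarith) (by linarith) j hint
    have : 0 ≤ f (2 * w) :=
      primitive_nonneg hF_nonneg hF_mono hf (by linarith) (by linarith)
    have : 0 ≤ f (2 * w) ^ (j + 1) / (j + 1) := by positivity
    linarith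

end Primitive

theorem key_convolution_bound (lam : ℝ) (hlam : 1 < lam) (F : ℝ → ℝ)
    (hF_nonneg : ∀ x : ℝ, 0 < x → 0 ≤ F x)
    (hF_mono : AntitoneOn F (Set.Ioc (0:ℝ) 2))
    (hF_bound : ∀ x : ℝ, 0 < x → F x ≤ 2 / (x * Real.log lam))
    (f : ℝ → ℝ) (hf : ∀ w : ℝ, f w = ∫ v in w..2, F v)
    (j : ℕ) (w : ℝ) (hw : w ∈ Set.Ioo (0:ℝ) 1) :
    (∫ u in (0:ℝ)..2, F (u + w) * f u ^ j) ≤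
      ∑ l ∈ Finset.range (j + 2),
        ((Nat.factorial j : ℝ) / (Nat.factorial (j + 1 - l) : ℝ)) *
          (4 / Real.log lam) ^ l * f (2*w) ^ (j + 1 - l) := by
  obtain ⟨hw0, hw1⟩ := hw
  have hL : 0 < Real.log lam := Real.log_pos hlam
  have ha : 0 ≤ f (2 * w) := primitive_nonneg hF_nonneg hF_mono hf (by linarith) (by linarith)
  by_cases hint : IntervalIntegrable (fun u => F (u + w) * f u ^ j) volume 0 2
  · have h2w : 2 * w ∈ uIcc (0 : ℝ) 2 := mem_uIcc_of_le (by linarith) (by linarith)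
    have hleft := hint.mono_set (uIcc_subset_uIcc left_mem_uIcc h2w)
    have hright := hint.mono_set (uIcc_subset_uIcc h2w right_mem_uIcc)
    rw [← integral_add_adjacent_intervals hleft hright, sum_range_succ_factorial_div_mul_pow]
    linarith [integral_head_le hF_nonneg hF_mono hF_bound hf hL hw0 hw1 j hleft,
      integral_tail_le hF_nonneg hF_mono hF_bound hf hL hw0 hw1 j hright]
  · rw [intervalIntegral.integral_undef hint]
    exact Finset.sum_nonneg fun l _ => by positivity
end

section
/- Fix θ ∈ ℝ and λ > e^{θ-γ+1/2}, and define f_λ(u) := ∫₀^∞ (1/σ)(e^{-σu} − e^{-2σ})/(log(λ + σ/2) − (θ−γ)) dσ. Then there exists a constant C > 0 such that for all sufficiently small ε > 0 and all u ∈ (0, ε²], f_λ(u) ≤ (1 + C/log log(1/ε)) · log log(1/u). -/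
open MeasureTheory Set

/-- `f_λ(u) = ∫₀^∞ σ⁻¹ (e^{-σu} - e^{-2σ}) / (log(λ+σ/2) - (θ-γ)) dσ`. -/
noncomputable def fLam (θ lam u : ℝ) : ℝ :=
  ∫ σ in Set.Ioi (0:ℝ),
    (1/σ) * (Real.exp (-σ * u) - Real.exp (-2 * σ)) /
      (Real.log (lam + σ/2) - (θ - eulerGamma))

/-!
Split the `σ`-integral at a constant `σ₁` and at `1/u`. On `(0, σ₁]` the integrand is bounded,
since `(e^{-σu} - e^{-2σ})/σ ≤ 2` and the denominator is at least `1/2`; on `(1/u, ∞)` it is at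
most `2u e^{-uσ}`, whose integral is `2/e`. In between it is at most `1/(σ log(κσ))` for a small
`κ > 0`, and this integrates to `log log(κ/u) - log log(κσ₁) ≤ log log(1/u)`. Hence
`f_λ(u) ≤ log log(1/u) + A`, and `A ≤ (A / log log(1/ε)) · log log(1/u)` once `u ≤ ε² ≤ ε`.
-/

open Real

noncomputable def fLamNum (u σ : ℝ) : ℝ := 1 / σ * (exp (-σ * u) - exp (-2 * σ))

noncomputable def fLamDen (θ lam σ : ℝ) : ℝ := log (lam + σ / 2) - (θ - eulerGamma)

lemma fLam_eq_integral_fLamNum_div_fLamDen (θ lam u : ℝ) :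
    fLam θ lam u = ∫ σ in Ioi 0, fLamNum u σ / fLamDen θ lam σ := rfl

section Numerator

variable {u σ : ℝ}

lemma fLamNum_le_two (hu : 0 ≤ u) (hσ : 0 < σ) : fLamNum u σ ≤ 2 := by
  have h₁ : exp (-σ * u) ≤ 1 := exp_le_one_iff.mpr (by nlinarith)
  have h₂ : 1 - 2 * σ ≤ exp (-2 * σ) := by linarith [add_one_le_exp (-2 * σ)]
  rw [fLamNum, one_div_mul_eq_div, div_le_iff₀ hσ]
  linarith

lemma fLamNum_le_inv (hu : 0 ≤ u) (hσ : 0 < σ) : fLamNum u σ ≤ σ⁻¹ := by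
  have h₁ : exp (-σ * u) ≤ 1 := exp_le_one_iff.mpr (by nlinarith)
  rw [fLamNum, one_div]
  exact mul_le_of_le_one_right (inv_nonneg.mpr hσ.le) (by linarith [exp_pos (-2 * σ)])

lemma fLamNum_le_mul_exp (hu : 0 < u) (hσ : 1 / u ≤ σ) : fLamNum u σ ≤ u * exp (-u * σ) := by
  have hσ₀ : 0 < σ := (one_div_pos.mpr hu).trans_le hσ
  have hinv : 1 / σ ≤ u := by rwa [one_div_le hσ₀ hu]
  calc fLamNum u σ ≤ 1 / σ * exp (-σ * u) :=
        mul_le_mul_of_nonneg_left (by linarith [exp_pos (-2 * σ)]) (by positivity)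
    _ ≤ u * exp (-u * σ) := by
        rw [show -u * σ = -σ * u by ring]
        exact mul_le_mul_of_nonneg_right hinv (exp_pos _).le

end Numerator

section Denominator

variable {θ lam σ : ℝ}

lemma one_half_le_fLamDen (hlam : lam > exp (θ - eulerGamma + 1 / 2)) (hσ : 0 ≤ σ) :
    1 / 2 ≤ fLamDen θ lam σ := by
  have hlog : θ - eulerGamma + 1 / 2 ≤ log (lam + σ / 2) :=
    (le_log_iff_exp_le (by linarith [exp_pos (θ - eulerGamma + 1 / 2)])).2 (by linarith)
  rw [fLamDen]
  linarith

lemma log_mul_le_fLamDen (hlam : 0 < lam) (hσ : 0 < σ) :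
    log (exp (eulerGamma - θ) / 2 * σ) ≤ fLamDen θ lam σ := by
  have hlog : log (σ / 2) ≤ log (lam + σ / 2) := log_le_log (by positivity) (by linarith)
  rw [div_mul_eq_mul_div, mul_div_assoc, log_mul (exp_pos _).ne' (by positivity), log_exp,
    fLamDen]
  linarith

end Denominator

lemma le_one_add_div_mul_of_le_add {x M A L : ℝ} (hx : x ≤ M + A) (hA : 0 ≤ A) (hL : 0 < L)
    (hLM : L ≤ M) : x ≤ (1 + A / L) * M := by
  have hML : 1 ≤ M / L := (one_le_div hL).2 hLM
  calc x ≤ M + A * 1 := by rwa [mul_one]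
    _ ≤ M + A * (M / L) := by gcongr
    _ = (1 + A / L) * M := by ring

lemma integral_inv_div_log_mul {κ a b : ℝ} (hκ : 0 < κ) (ha : 1 < κ * a) (hb : 1 < κ * b) :
    ∫ σ in a..b, σ⁻¹ / log (κ * σ) = log (log (κ * b)) - log (log (κ * a)) := by
  have hscale : ∀ σ : ℝ, σ⁻¹ / log (κ * σ) = κ * ((κ * σ)⁻¹ / log (κ * σ)) := fun σ => by
    rw [mul_inv, ← mul_div_assoc, ← mul_assoc, mul_inv_cancel₀ hκ.ne', one_mul]
  simp_rw [hscale, intervalIntegral.integral_const_mul,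
    intervalIntegral.integral_comp_mul_left (fun t => t⁻¹ / log t) hκ.ne', smul_eq_mul,
    ← mul_assoc, mul_inv_cancel₀ hκ.ne', one_mul]
  exact integral_inv_div_log ha hb

section SplitIntegral

variable {d : ℝ → ℝ} {δ u : ℝ}

lemma integral_zero_fLamNum_div_le (hδ : 0 < δ) (hd : ∀ σ, 0 < σ → δ ≤ d σ) (hu : 0 ≤ u)
    {σ₁ : ℝ} (hσ₁ : 0 ≤ σ₁) (hint : IntervalIntegrable (fun σ => fLamNum u σ / d σ) volume 0 σ₁) :
    ∫ σ in (0)..σ₁, fLamNum u σ / d σ ≤ 2 * σ₁ / δ := by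
  calc ∫ σ in (0)..σ₁, fLamNum u σ / d σ ≤ ∫ _ in (0)..σ₁, 2 / δ :=
        intervalIntegral.integral_mono_on_of_le_Ioo hσ₁ hint intervalIntegrable_const
          fun σ hσ => div_le_div₀ zero_le_two (fLamNum_le_two hu hσ.1) hδ (hd σ hσ.1)
    _ = 2 * σ₁ / δ := by rw [intervalIntegral.integral_const, smul_eq_mul]; ring

lemma integral_fLamNum_div_le_loglog {κ σ₁ T : ℝ} (hσ₁ : 0 < σ₁) (hκσ₁ : 1 < κ * σ₁)
    (hσ₁T : σ₁ ≤ T) (hd : ∀ σ, σ₁ ≤ σ → log (κ * σ) ≤ d σ) (hu : 0 ≤ u)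
    (hint : IntervalIntegrable (fun σ => fLamNum u σ / d σ) volume σ₁ T) :
    ∫ σ in σ₁..T, fLamNum u σ / d σ ≤ log (log (κ * T)) - log (log (κ * σ₁)) := by
  have hκ : 0 < κ := pos_of_mul_pos_left (one_pos.trans hκσ₁) hσ₁.le
  have hlog : ∀ σ, σ₁ ≤ σ → 0 < log (κ * σ) := fun σ hσ =>
    log_pos (hκσ₁.trans_le (mul_le_mul_of_nonneg_left hσ hκ.le))
  have hcont : ContinuousOn (fun σ => σ⁻¹ / log (κ * σ)) (uIcc σ₁ T) := by
    rw [uIcc_of_le hσ₁T]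
    refine ContinuousOn.div ?_ ?_ fun σ hσ => (hlog σ hσ.1).ne'
    · exact continuousOn_inv₀.mono fun σ hσ => (hσ₁.trans_le hσ.1).ne'
    · exact continuousOn_log.comp (continuousOn_const.mul continuousOn_id)
        fun σ hσ => (mul_pos hκ (hσ₁.trans_le hσ.1)).ne'
  calc ∫ σ in σ₁..T, fLamNum u σ / d σ ≤ ∫ σ in σ₁..T, σ⁻¹ / log (κ * σ) :=
        intervalIntegral.integral_mono_on_of_le_Ioo hσ₁T hint hcont.intervalIntegrable
          fun σ hσ => div_le_div₀ (inv_nonneg.mpr (hσ₁.trans hσ.1).le)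
            (fLamNum_le_inv hu (hσ₁.trans hσ.1)) (hlog σ hσ.1.le) (hd σ hσ.1.le)
    _ = log (log (κ * T)) - log (log (κ * σ₁)) :=
        integral_inv_div_log_mul hκ hκσ₁ (hκσ₁.trans_le (mul_le_mul_of_nonneg_left hσ₁T hκ.le))

lemma setIntegral_Ioi_fLamNum_div_le (hδ : 0 < δ) (hd : ∀ σ, 0 < σ → δ ≤ d σ) (hu : 0 < u)
    (hint : IntegrableOn (fun σ => fLamNum u σ / d σ) (Ioi (1 / u))) :
    ∫ σ in Ioi (1 / u), fLamNum u σ / d σ ≤ exp (-1) / δ := by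
  calc ∫ σ in Ioi (1 / u), fLamNum u σ / d σ ≤ ∫ σ in Ioi (1 / u), u / δ * exp (-u * σ) :=
        setIntegral_mono_on hint ((exp_neg_integrableOn_Ioi _ hu).const_mul _) measurableSet_Ioi
          fun σ hσ => by
            have hσ₀ : 0 < σ := (one_div_pos.mpr hu).trans hσ
            rw [div_mul_eq_mul_div]
            exact div_le_div₀ (by positivity) (fLamNum_le_mul_exp hu hσ.le) hδ (hd σ hσ₀)
    _ = exp (-1) / δ := by
        rw [integral_const_mul, integral_exp_mul_Ioi (neg_lt_zero.mpr hu)]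
        field_simp

theorem integral_fLamNum_div_le_loglog_add {κ σ₁ : ℝ} (hδ : 0 < δ) (hd₀ : ∀ σ, 0 < σ → δ ≤ d σ)
    (hκ : 0 < κ) (hκ₁ : κ ≤ 1) (hκσ₁ : exp 1 ≤ κ * σ₁) (hd₁ : ∀ σ, σ₁ ≤ σ → log (κ * σ) ≤ d σ)
    (hu : 0 < u) (huσ₁ : σ₁ ≤ 1 / u) :
    ∫ σ in Ioi 0, fLamNum u σ / d σ ≤ log (log (1 / u)) + (2 * σ₁ + 1) / δ := by
  have hσ₁ : 0 < σ₁ := pos_of_mul_pos_right ((exp_pos 1).trans_le hκσ₁) hκ.le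
  have hκu_le : κ * (1 / u) ≤ 1 / u := mul_le_of_le_one_left (by positivity) hκ₁
  have hlog_κσ₁ : 1 ≤ log (κ * σ₁) := by rwa [le_log_iff_exp_le (by positivity)]
  have hlog_κu : log (κ * σ₁) ≤ log (κ * (1 / u)) :=
    log_le_log (by positivity) (mul_le_mul_of_nonneg_left huσ₁ hκ.le)
  have hloglog_u : log (log (κ * (1 / u))) ≤ log (log (1 / u)) :=
    log_le_log (by linarith) (log_le_log (by positivity) hκu_le)
  by_cases hint : IntegrableOn (fun σ => fLamNum u σ / d σ) (Ioi 0)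
  · have hint_Ioc : ∀ a b, 0 ≤ a → a ≤ b →
        IntervalIntegrable (fun σ => fLamNum u σ / d σ) volume a b := fun a b ha hab =>
      (intervalIntegrable_iff_integrableOn_Ioc_of_le hab).2
        (hint.mono_set fun σ hσ => ha.trans_lt hσ.1)
    have hint_Ioi := hint.mono_set (Ioi_subset_Ioi (hσ₁.trans_le huσ₁).le)
    rw [← intervalIntegral.integral_interval_add_Ioi hint hint_Ioi,
      ← intervalIntegral.integral_add_adjacent_intervals (hint_Ioc 0 σ₁ le_rfl hσ₁.le)
        (hint_Ioc σ₁ _ hσ₁.le huσ₁)]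
    have h₁ := integral_zero_fLamNum_div_le hδ hd₀ hu.le hσ₁.le (hint_Ioc 0 σ₁ le_rfl hσ₁.le)
    have h₂ := integral_fLamNum_div_le_loglog hσ₁ ((one_lt_exp_iff.mpr one_pos).trans_le hκσ₁)
      huσ₁ hd₁ hu.le (hint_Ioc σ₁ _ hσ₁.le huσ₁)
    have h₃ := setIntegral_Ioi_fLamNum_div_le hδ hd₀ hu hint_Ioi
    have h₄ : exp (-1) / δ ≤ 1 / δ :=
      div_le_div_of_nonneg_right (exp_le_one_iff.mpr (by norm_num)) hδ.le
    have h₅ : 0 ≤ log (log (κ * σ₁)) := log_nonneg hlog_κσ₁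
    linarith [add_div (2 * σ₁) 1 δ]
  · rw [integral_undef hint]
    have : 0 ≤ log (log (κ * (1 / u))) := log_nonneg (hlog_κσ₁.trans hlog_κu)
    have : 0 ≤ (2 * σ₁ + 1) / δ := by positivity
    linarith

end SplitIntegral

theorem fLam_le_loglog_add {θ lam : ℝ} (hlam : lam > exp (θ - eulerGamma + 1 / 2)) :
    ∃ A > 0, ∃ u₀ > 0, ∀ u, 0 < u → u ≤ u₀ → fLam θ lam u ≤ log (log (1 / u)) + A := by
  set κ := min 1 (exp (eulerGamma - θ) / 2)
  have hκ : 0 < κ := lt_min one_pos (by positivity)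
  have hσ₁ : 0 < exp 1 / κ := by positivity
  refine ⟨(2 * (exp 1 / κ) + 1) / (1 / 2), by positivity, 1 / (exp 1 / κ), by positivity,
    fun u hu hu₀ => ?_⟩
  rw [fLam_eq_integral_fLamNum_div_fLamDen]
  refine integral_fLamNum_div_le_loglog_add one_half_pos
    (fun σ hσ => one_half_le_fLamDen hlam hσ.le) hκ (min_le_left _ _)
    (by rw [mul_div_cancel₀ _ hκ.ne']) (fun σ hσ => ?_) hu ((le_one_div hσ₁ hu).2 hu₀)
  have hσ₀ : 0 < σ := hσ₁.trans_le hσ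
  exact (log_le_log (by positivity) (mul_le_mul_of_nonneg_right (min_le_right _ _) hσ₀.le)).trans
    (log_mul_le_fLamDen ((exp_pos _).trans hlam) hσ₀)

theorem fLam_asymptotic (θ lam : ℝ) (hlam : lam > Real.exp (θ - eulerGamma + 1/2)) :
    ∃ C : ℝ, 0 < C ∧ ∃ ε₀ : ℝ, 0 < ε₀ ∧ ∀ ε : ℝ, 0 < ε → ε < ε₀ →
      ∀ u : ℝ, 0 < u → u ≤ ε^2 →
        fLam θ lam u ≤ (1 + C / Real.log (Real.log (1/ε))) * Real.log (Real.log (1/u)) := by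
  obtain ⟨A, hA, u₀, hu₀, hbound⟩ := fLam_le_loglog_add hlam
  refine ⟨A, hA, min u₀ (exp (-1)), by positivity, fun ε hε hεε₀ u hu huε => ?_⟩
  have hε_lt : ε < exp (-1) := hεε₀.trans_le (min_le_right _ _)
  have hu_le_ε : u ≤ ε :=
    huε.trans (pow_le_of_le_one hε.le (hε_lt.trans (exp_lt_one_iff.2 (by norm_num))).le two_ne_zero)
  have hlog_ε : 1 < log (1 / ε) := by
    rw [lt_log_iff_exp_lt (by positivity), lt_one_div (exp_pos 1) hε, one_div, ← exp_neg]
    exact hε_lt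
  have hLM : log (log (1 / ε)) ≤ log (log (1 / u)) :=
    log_le_log (by linarith) (log_le_log (by positivity) (one_div_le_one_div_of_le hu hu_le_ε))
  exact le_one_add_div_mul_of_le_add (hbound u hu (hu_le_ε.trans (hεε₀.le.trans (min_le_left _ _))))
    hA.le (log_pos hlog_ε) hLM
end
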